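/- The posterior weights of the last change point satisfy the recursion: v(τ | x^t) = (1−α) · q(x_t | x_τ … x_{t−1}) v(τ | x^{t−1}) / p̃(x_t|x^{t−1}) for τ ∈ {1,…,t}, and v(t+1 | x^t) = α, where p̃(x_t|x^{t−1}) = Σ_{τ=1}^t q(x_t|x_τ…x_{t−1}) v(τ|x^{t−1}); moreover Σ_{τ=1}^{t+1} v(τ | x^t) = 1. -/
import Mathlib


/-- `|T_c|`: the number of change points of the pattern `c ∈ {0,1}^N`. -/
def changeCount {N : ℕ} (c : Fin N → Bool) : ℕ :=
  (Finset.univ.filter (fun t : Fin N => c t = true)).card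

/-- The Bernoulli(α) prior `π(c) = α^(|T_c|-1) (1-α)^(N-|T_c|)` on change patterns. -/
noncomputable def changePrior (α : ℝ) {N : ℕ} (c : Fin N → Bool) : ℝ :=
  α ^ (changeCount c - 1) * (1 - α) ^ (N - changeCount c)

/-- `τ_s(c)`: the largest (1-indexed) change point `≤ s` of the pattern `c`. -/
def lastCP {N : ℕ} (c : Fin N → Bool) (s : ℕ) : ℕ :=
  ((Finset.univ.filter (fun i : Fin N => i.val < s ∧ c i = true)).sup
    (fun i : Fin N => i.val)) + 1

/-- `p(x^t | c) = ∏_{s=1}^t q(x_s | x_{τ_s(c)} … x_{s-1})`: the likelihood of the data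
up to time `t` given the pattern `c`, where `q τ s` denotes the predictive probability
`q(x_s | x_τ … x_{s-1})` of the observed symbol `x_s` given that the current segment
started at time `τ` (the data sequence itself is absorbed into `q`). -/
noncomputable def segLik {N : ℕ} (q : ℕ → ℕ → ℝ) (t : ℕ) (c : Fin N → Bool) : ℝ :=
  ∏ s ∈ Finset.Icc 1 t, q (lastCP c s) s

-- L1
lemma lastCP_le {N : ℕ} (c : Fin N → Bool) {s : ℕ} (hs : 1 ≤ s) : lastCP c s ≤ s := by
  unfold lastCP
  have : ((Finset.univ.filter (fun i : Fin N => i.val < s ∧ c i = true)).sup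
      (fun i : Fin N => i.val)) ≤ s - 1 := by
    apply Finset.sup_le
    intro b hb
    simp only [Finset.mem_filter] at hb
    omega
  omega

lemma one_le_lastCP {N : ℕ} (c : Fin N → Bool) (s : ℕ) : 1 ≤ lastCP c s := by
  unfold lastCP; omega

-- L2
lemma lastCP_update {N : ℕ} (c : Fin N → Bool) (i : Fin N) (b : Bool) {s : ℕ}
    (hs : s ≤ i.val) : lastCP (Function.update c i b) s = lastCP c s := by
  unfold lastCP
  congr 2
  ext x
  simp only [Finset.mem_filter, Finset.mem_univ, true_and, Function.update_apply]
  rcases eq_or_ne x i with rfl | hx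
  · simp only [if_pos rfl]
    constructor <;> (rintro ⟨h1, -⟩; omega)
  · simp [hx]

-- L3
lemma lastCP_succ_true {N : ℕ} {c : Fin N → Bool} {i : Fin N} {t : ℕ}
    (hi : i.val = t) (hc : c i = true) : lastCP c (t + 1) = t + 1 := by
  unfold lastCP
  congr 1
  apply le_antisymm
  · apply Finset.sup_le
    intro b hb
    simp only [Finset.mem_filter] at hb
    omega
  · have : i ∈ Finset.univ.filter (fun x : Fin N => x.val < t + 1 ∧ c x = true) := by
      simp [hc]; omega
    calc t = i.val := hi.symm
      _ ≤ _ := Finset.le_sup this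

-- L4
lemma lastCP_succ_false {N : ℕ} {c : Fin N → Bool} {i : Fin N} {t : ℕ}
    (hi : i.val = t) (hc : c i = false) : lastCP c (t + 1) = lastCP c t := by
  unfold lastCP
  congr 2
  ext x
  simp only [Finset.mem_filter, Finset.mem_univ, true_and]
  constructor
  · rintro ⟨h1, h2⟩
    refine ⟨?_, h2⟩
    rcases Nat.lt_or_ge x.val t with h | h
    · exact h
    · exfalso
      have hxi : x = i := Fin.ext (by omega)
      rw [hxi, hc] at h2; exact Bool.noConfusion h2
  · rintro ⟨h1, h2⟩; exact ⟨by omega, h2⟩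

-- L5
lemma segLik_update {N : ℕ} (q : ℕ → ℕ → ℝ) {t : ℕ} (c : Fin N → Bool) (i : Fin N)
    (b : Bool) (ht : t ≤ i.val) : segLik q t (Function.update c i b) = segLik q t c := by
  unfold segLik
  apply Finset.prod_congr rfl
  intro s hs
  simp only [Finset.mem_Icc] at hs
  rw [lastCP_update c i b (by omega)]

-- L6
lemma segLik_succ {N : ℕ} (q : ℕ → ℕ → ℝ) {t : ℕ} (ht : 1 ≤ t) (c : Fin N → Bool) :
    segLik q t c = segLik q (t - 1) c * q (lastCP c t) t := by
  obtain ⟨n, rfl⟩ : ∃ n, t = n + 1 := ⟨t - 1, by omega⟩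
  unfold segLik
  rw [Finset.prod_Icc_succ_top (by omega)]
  simp

-- changeCount lemmas
lemma changeCount_le {N : ℕ} (c : Fin N → Bool) : changeCount c ≤ N := by
  unfold changeCount
  calc _ ≤ (Finset.univ : Finset (Fin N)).card := Finset.card_filter_le _ _
    _ = N := by simp

lemma changeCount_update_false {N : ℕ} {c : Fin N → Bool} {i : Fin N} (h : c i = true) :
    changeCount (Function.update c i false) + 1 = changeCount c := by
  unfold changeCount
  have hset : (Finset.univ.filter (fun x : Fin N => Function.update c i false x = true))
      = (Finset.univ.filter (fun x : Fin N => c x = true)).erase i := by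
    ext x
    simp only [Finset.mem_filter, Finset.mem_univ, true_and, Finset.mem_erase,
      Function.update_apply]
    rcases eq_or_ne x i with rfl | hx
    · simp
    · simp [hx]
  rw [hset, Finset.card_erase_of_mem (by simp [h])]
  have : 1 ≤ (Finset.univ.filter (fun x : Fin N => c x = true)).card :=
    Finset.card_pos.mpr ⟨i, by simp [h]⟩
  omega

lemma two_le_changeCount {N : ℕ} {c : Fin N → Bool} {i j : Fin N} (hj : c j = true)
    (hi : c i = true) (hij : j ≠ i) : 2 ≤ changeCount c := by
  unfold changeCount
  have hsub : ({j, i} : Finset (Fin N)) ⊆ Finset.univ.filter (fun x : Fin N => c x = true) := by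
    intro x hx
    simp only [Finset.mem_insert, Finset.mem_singleton] at hx
    rcases hx with rfl | rfl <;> simp [hj, hi]
  calc 2 = ({j, i} : Finset (Fin N)).card := (Finset.card_pair hij).symm
    _ ≤ _ := Finset.card_le_card hsub

-- L7
lemma prior_flip {N : ℕ} (α : ℝ) {c : Fin N → Bool} {i j : Fin N} (hj : c j = true)
    (hi : c i = true) (hij : j ≠ i) :
    (1 - α) * changePrior α c = α * changePrior α (Function.update c i false) := by
  have h2 : 2 ≤ changeCount c := two_le_changeCount hj hi hij
  have hle : changeCount c ≤ N := changeCount_le c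
  have hcc : changeCount (Function.update c i false) + 1 = changeCount c :=
    changeCount_update_false hi
  unfold changePrior
  obtain ⟨a, ha⟩ : ∃ a, changeCount (Function.update c i false) = a + 1 :=
    ⟨changeCount (Function.update c i false) - 1, by omega⟩
  obtain ⟨b, hb⟩ : ∃ b, N = changeCount c + b := ⟨N - changeCount c, by omega⟩
  have h1 : changeCount c = a + 2 := by omega
  have e1 : changeCount c - 1 = a + 1 := by omega
  have e2 : N - changeCount c = b := by omega
  have e3 : changeCount (Function.update c i false) - 1 = a := by omega
  have e4 : N - changeCount (Function.update c i false) = b + 1 := by omega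
  rw [e1, e2, e3, e4]
  ring

-- L8: flip sum lemma
lemma flip_sum {N : ℕ} (α : ℝ) (i j : Fin N) (hij : j ≠ i)
    (A : Finset (Fin N → Bool))
    (hA : ∀ c, c ∈ A → ∀ b, Function.update c i b ∈ A)
    (hj : ∀ c ∈ A, c j = true)
    (g : (Fin N → Bool) → ℝ)
    (hg : ∀ c b, g (Function.update c i b) = g c) :
    ∑ c ∈ A.filter (fun c => c i = true), changePrior α c * g c
      = α * ∑ c ∈ A, changePrior α c * g c := by
  classical
  set ST := ∑ c ∈ A.filter (fun c => c i = true), changePrior α c * g c with hST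
  set SF := ∑ c ∈ A.filter (fun c => ¬ (c i = true)), changePrior α c * g c with hSF
  have hsplit : ST + SF = ∑ c ∈ A, changePrior α c * g c :=
    Finset.sum_filter_add_sum_filter_not A _ _
  have key : (1 - α) * ST = α * SF := by
    rw [hST, Finset.mul_sum, hSF, Finset.mul_sum]
    apply Finset.sum_nbij' (fun c => Function.update c i false)
      (fun c => Function.update c i true)
    · intro c hc
      simp only [Finset.mem_filter] at hc ⊢
      refine ⟨hA c hc.1 false, by simp⟩
    · intro c hc
      simp only [Finset.mem_filter] at hc ⊢
      refine ⟨hA c hc.1 true, by simp⟩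
    · intro c hc
      simp only [Finset.mem_filter] at hc
      funext x
      rcases eq_or_ne x i with rfl | hx
      · simp [hc.2]
      · simp [Function.update_apply, hx]
    · intro c hc
      simp only [Finset.mem_filter] at hc
      funext x
      rcases eq_or_ne x i with rfl | hx
      · simp at hc; simp [hc.2]
      · simp [Function.update_apply, hx]
    · intro c hc
      simp only [Finset.mem_filter] at hc
      have hcj : c j = true := hj c hc.1
      rw [hg, ← mul_assoc, ← mul_assoc, ← prior_flip α hcj hc.2 hij]
  have hcomb : ST = α * (ST + SF) := by ring_nf; nlinarith [key]
  rw [← hsplit]; exact hcomb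

lemma flip_sum_false {N : ℕ} (α : ℝ) (i j : Fin N) (hij : j ≠ i)
    (A : Finset (Fin N → Bool))
    (hA : ∀ c, c ∈ A → ∀ b, Function.update c i b ∈ A)
    (hj : ∀ c ∈ A, c j = true)
    (g : (Fin N → Bool) → ℝ)
    (hg : ∀ c b, g (Function.update c i b) = g c) :
    ∑ c ∈ A.filter (fun c => c i = false), changePrior α c * g c
      = (1 - α) * ∑ c ∈ A, changePrior α c * g c := by
  classical
  have hsplit : (∑ c ∈ A.filter (fun c => c i = true), changePrior α c * g c)
      + ∑ c ∈ A.filter (fun c => ¬ (c i = true)), changePrior α c * g c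
      = ∑ c ∈ A, changePrior α c * g c :=
    Finset.sum_filter_add_sum_filter_not A _ _
  have hT := flip_sum α i j hij A hA hj g hg
  have hfil : A.filter (fun c => ¬ (c i = true)) = A.filter (fun c => c i = false) := by
    apply Finset.filter_congr; intro c _; simp
  rw [hfil] at hsplit
  linarith

/-- `v(τ | x^t)`: the posterior probability that the last change point `τ_{t+1}`
(the start of the segment containing time `t+1`) equals `τ`, given `x^t`. -/
noncomputable def vPost (α : ℝ) (N : ℕ) (hN : 0 < N) (q : ℕ → ℕ → ℝ) (t τ : ℕ) : ℝ :=
  (∑ c ∈ Finset.univ.filter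
      (fun c : Fin N → Bool => c ⟨0, hN⟩ = true ∧ lastCP c (t + 1) = τ),
    changePrior α c * segLik q t c) /
  (∑ c ∈ Finset.univ.filter (fun c : Fin N → Bool => c ⟨0, hN⟩ = true),
    changePrior α c * segLik q t c)

/-- The posterior weights of the last change point satisfy the recursion
`v(τ | x^t) = (1-α) q(x_t | x_τ … x_{t-1}) v(τ | x^{t-1}) / p̃(x_t|x^{t-1})` for
`τ ∈ {1,…,t}` and `v(t+1 | x^t) = α`, where
`p̃(x_t|x^{t-1}) = Σ_{τ=1}^t q(x_t|x_τ…x_{t-1}) v(τ|x^{t-1})`; moreover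
`Σ_{τ=1}^{t+1} v(τ | x^t) = 1`. -/
theorem stmt10 (α : ℝ) (hα : α ∈ Set.Icc (0 : ℝ) 1) (N : ℕ) (hN : 0 < N)
    (q : ℕ → ℕ → ℝ) (hq : ∀ τ s, 0 ≤ q τ s) (t : ℕ) (ht : 1 ≤ t) (htN : t < N)
    (hZ : 0 < ∑ c ∈ Finset.univ.filter (fun c : Fin N → Bool => c ⟨0, hN⟩ = true),
      changePrior α c * segLik q t c)
    (hZ' : 0 < ∑ c ∈ Finset.univ.filter (fun c : Fin N → Bool => c ⟨0, hN⟩ = true),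
      changePrior α c * segLik q (t - 1) c) :
    (∀ τ : ℕ, 1 ≤ τ → τ ≤ t →
      vPost α N hN q t τ =
        (1 - α) * q τ t * vPost α N hN q (t - 1) τ /
          ∑ τ' ∈ Finset.Icc 1 t, q τ' t * vPost α N hN q (t - 1) τ') ∧
    vPost α N hN q t (t + 1) = α ∧
    ∑ τ ∈ Finset.Icc 1 (t + 1), vPost α N hN q t τ = 1 := by
  classical
  have hij : (⟨0, hN⟩ : Fin N) ≠ (⟨t, htN⟩ : Fin N) := by
    intro h
    have : (0 : ℕ) = t := congrArg Fin.val h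
    omega
  set i : Fin N := ⟨t, htN⟩ with hidef
  set j : Fin N := ⟨0, hN⟩ with hjdef
  set A := Finset.univ.filter (fun c : Fin N → Bool => c j = true) with hAdef
  have hA_mem : ∀ c, c ∈ A → ∀ b, Function.update c i b ∈ A := by
    intro c hc b
    simp only [hAdef, Finset.mem_filter, Finset.mem_univ, true_and] at hc ⊢
    rw [Function.update_apply, if_neg hij]; exact hc
  have hj_mem : ∀ c ∈ A, c j = true := by
    intro c hc
    simpa [hAdef] using hc
  set Zt := ∑ c ∈ A, changePrior α c * segLik q t c with hZt
  set Zp := ∑ c ∈ A, changePrior α c * segLik q (t - 1) c with hZp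
  have hZtpos : 0 < Zt := hZ
  have hZppos : 0 < Zp := hZ'
  set Num : ℕ → ℝ := fun τ =>
    ∑ c ∈ A.filter (fun c => lastCP c (t + 1) = τ), changePrior α c * segLik q t c with hNum
  set M : ℕ → ℝ := fun τ =>
    ∑ c ∈ A.filter (fun c => lastCP c t = τ), changePrior α c * segLik q (t - 1) c with hM
  have htt : t - 1 + 1 = t := by omega
  have hival : (i : Fin N).val = t := rfl
  -- vPost in terms of Num, M
  have hv : ∀ τ, vPost α N hN q t τ = Num τ / Zt := by
    intro τ
    unfold vPost
    simp only [hNum, hZt, hAdef, hjdef, Finset.filter_filter]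
  have hv' : ∀ τ, vPost α N hN q (t - 1) τ = M τ / Zp := by
    intro τ
    unfold vPost
    simp only [hM, hZp, hAdef, hjdef, Finset.filter_filter, htt]
  -- segLik invariance under flipping bit i
  have hgt : ∀ (c : Fin N → Bool) b, segLik q t (Function.update c i b) = segLik q t c :=
    fun c b => segLik_update q c i b (le_of_eq hival.symm)
  have hgp : ∀ (c : Fin N → Bool) b,
      segLik q (t - 1) (Function.update c i b) = segLik q (t - 1) c :=
    fun c b => segLik_update q c i b (by rw [hival]; omega)
  -- Num (t+1) = α * Zt
  have hNtop : Num (t + 1) = α * Zt := by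
    simp only [hNum]
    have hfil : A.filter (fun c => lastCP c (t + 1) = t + 1)
        = A.filter (fun c => c i = true) := by
      ext c
      simp only [Finset.mem_filter]
      constructor
      · rintro ⟨hcA, h⟩
        refine ⟨hcA, ?_⟩
        by_contra hci
        have hfalse : c i = false := by
          cases h' : c i
          · rfl
          · exact absurd h' hci
        have h4 := lastCP_succ_false (c := c) hival hfalse
        have hle := lastCP_le c (s := t) ht
        omega
      · rintro ⟨hcA, h⟩
        exact ⟨hcA, lastCP_succ_true (c := c) hival h⟩
    rw [hfil]
    exact flip_sum α i j hij A hA_mem hj_mem _ hgt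
  -- Num τ = (1-α) * q τ t * M τ  for  τ ≤ t
  have hNmid : ∀ τ, τ ≤ t → Num τ = (1 - α) * q τ t * M τ := by
    intro τ hτ
    simp only [hNum]
    have hfil : A.filter (fun c => lastCP c (t + 1) = τ)
        = (A.filter (fun c => lastCP c t = τ)).filter (fun c => c i = false) := by
      ext c
      simp only [Finset.mem_filter, and_assoc]
      constructor
      · rintro ⟨hcA, h⟩
        have hfalse : c i = false := by
          cases h' : c i
          · rfl
          · exfalso
            have := lastCP_succ_true (c := c) hival h'
            omega
        refine ⟨hcA, ?_, hfalse⟩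
        rw [← lastCP_succ_false (c := c) hival hfalse]
        exact h
      · rintro ⟨hcA, h1, h2⟩
        refine ⟨hcA, ?_⟩
        rw [lastCP_succ_false (c := c) hival h2]
        exact h1
    rw [hfil]
    have hseg : ∀ c ∈ (A.filter (fun c => lastCP c t = τ)).filter (fun c => c i = false),
        changePrior α c * segLik q t c
          = q τ t * (changePrior α c * segLik q (t - 1) c) := by
      intro c hc
      simp only [Finset.mem_filter] at hc
      rw [segLik_succ q ht c, hc.1.2]
      ring
    rw [Finset.sum_congr rfl hseg, ← Finset.mul_sum]
    have hA' : ∀ c, c ∈ A.filter (fun c => lastCP c t = τ) → ∀ b,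
        Function.update c i b ∈ A.filter (fun c => lastCP c t = τ) := by
      intro c hc b
      simp only [Finset.mem_filter] at hc ⊢
      refine ⟨hA_mem c hc.1 b, ?_⟩
      rw [lastCP_update c i b (le_of_eq hival.symm)]
      exact hc.2
    have hj' : ∀ c ∈ A.filter (fun c => lastCP c t = τ), c j = true := by
      intro c hc
      exact hj_mem c (Finset.mem_filter.mp hc).1
    rw [flip_sum_false α i j hij _ hA' hj' _ hgp]
    simp only [hM]
    ring
  -- fiberwise decomposition of Zt
  have hfiber : ∑ τ ∈ Finset.Icc 1 (t + 1), Num τ = Zt := by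
    simp only [hNum, hZt]
    apply Finset.sum_fiberwise_of_maps_to
    intro c _
    simp only [Finset.mem_Icc]
    exact ⟨one_le_lastCP c (t + 1), lastCP_le c (by omega)⟩
  -- part 2
  have part2 : vPost α N hN q t (t + 1) = α := by
    rw [hv, hNtop, mul_div_assoc, div_self (ne_of_gt hZtpos), mul_one]
  -- part 3
  have part3 : ∑ τ ∈ Finset.Icc 1 (t + 1), vPost α N hN q t τ = 1 := by
    have hsum : ∑ τ ∈ Finset.Icc 1 (t + 1), vPost α N hN q t τ
        = (∑ τ ∈ Finset.Icc 1 (t + 1), Num τ) / Zt := by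
      rw [Finset.sum_div]
      exact Finset.sum_congr rfl fun τ _ => hv τ
    rw [hsum, hfiber, div_self (ne_of_gt hZtpos)]
  -- the S sum
  set S := ∑ τ' ∈ Finset.Icc 1 t, q τ' t * M τ' with hS
  have hZS : (1 - α) * Zt = (1 - α) * S := by
    have hsplit : ∑ τ ∈ Finset.Icc 1 (t + 1), Num τ
        = Num (t + 1) + ∑ τ ∈ Finset.Icc 1 t, Num τ := by
      rw [show Finset.Icc 1 (t + 1) = insert (t + 1) (Finset.Icc 1 t) by
        ext x; simp only [Finset.mem_Icc, Finset.mem_insert]; omega]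
      rw [Finset.sum_insert (by simp [Finset.mem_Icc])]
    have hmidsum : ∑ τ ∈ Finset.Icc 1 t, Num τ = (1 - α) * S := by
      rw [hS, Finset.mul_sum]
      apply Finset.sum_congr rfl
      intro τ hτ
      simp only [Finset.mem_Icc] at hτ
      rw [hNmid τ hτ.2]
      ring
    have hfib := hfiber
    rw [hsplit, hNtop, hmidsum] at hfib
    linarith
  have hDsum : ∑ τ' ∈ Finset.Icc 1 t, q τ' t * vPost α N hN q (t - 1) τ' = S / Zp := by
    rw [hS, Finset.sum_div]
    apply Finset.sum_congr rfl
    intro τ' _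
    rw [hv' τ']
    ring
  refine ⟨?_, part2, part3⟩
  intro τ hτ1 hτ2
  rw [hv, hNmid τ hτ2, hv', hDsum]
  rcases eq_or_ne α 1 with rfl | hα1
  · simp
  · have hZtS : Zt = S := by
      have h1a : (1 : ℝ) - α ≠ 0 := sub_ne_zero_of_ne (Ne.symm hα1)
      exact mul_left_cancel₀ h1a hZS
    have hSpos : 0 < S := hZtS ▸ hZtpos
    rw [hZtS]
    field_simp
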